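/- Let (X_n) be a sequence of random variables in L²(Ω; ℝ^d) converging in L² to X_∞, and let G be a sub-σ-algebra; then E[W₂²(L(X_n | G), L(X_∞ | G))] → 0 as n → ∞. -/

import Mathlib

open MeasureTheory ProbabilityTheory ENNReal Filter

lemma lintegral_lintegral_condDistrib {α β Ω' : Type*} {mα : MeasurableSpace α}
    [mβ : MeasurableSpace β] [MeasurableSpace Ω'] [StandardBorelSpace Ω'] [Nonempty Ω']
    (μ : Measure α) [IsFiniteMeasure μ] {X : α → β} {Y : α → Ω'}
    (hX : Measurable X) (hY : Measurable Y) {f : Ω' → ℝ≥0∞} (hf : Measurable f) :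
    ∫⁻ a, ∫⁻ y, f y ∂(condDistrib Y X μ (X a)) ∂μ = ∫⁻ a, f (Y a) ∂μ := by
  have hmap : μ.map (fun a => (X a, Y a)) = (μ.map X) ⊗ₘ condDistrib Y X μ := by
    have h := Measure.disintegrate (μ.map (fun a => (X a, Y a))) (μ.map (fun a => (X a, Y a))).condKernel
    rw [Measure.fst_map_prodMk hY] at h
    rw [condDistrib]
    exact h.symm
  calc ∫⁻ a, ∫⁻ y, f y ∂(condDistrib Y X μ (X a)) ∂μ
      = ∫⁻ x, ∫⁻ y, f y ∂(condDistrib Y X μ x) ∂(μ.map X) :=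
        (lintegral_map (Measurable.lintegral_kernel hf) hX).symm
    _ = ∫⁻ p, f p.2 ∂((μ.map X) ⊗ₘ condDistrib Y X μ) :=
        (Measure.lintegral_compProd (hf.comp measurable_snd)).symm
    _ = ∫⁻ p, f p.2 ∂(μ.map (fun a => (X a, Y a))) := by rw [hmap]
    _ = ∫⁻ a, f (Y a) ∂μ := lintegral_map (hf.comp measurable_snd) (hX.prodMk hY)

lemma lintegral_lintegral_condExpKernel {Ω : Type*} [mΩ : MeasurableSpace Ω]
    [StandardBorelSpace Ω] [Nonempty Ω] (μ : Measure Ω) [IsFiniteMeasure μ]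
    {f : Ω → ℝ≥0∞} (hf : Measurable f) (G : MeasurableSpace Ω) :
    ∫⁻ ω, ∫⁻ y, f y ∂(condExpKernel (mΩ := mΩ) μ G ω) ∂μ = ∫⁻ y, f y ∂μ := by
  letI : MeasurableSpace Ω := mΩ
  simp_rw [condExpKernel_apply_eq_condDistrib]
  exact lintegral_lintegral_condDistrib (mβ := G ⊓ mΩ) μ
    (measurable_id'' inf_le_right) measurable_id hf

/-- The `p`-Wasserstein cost (to the power `p`) between two measures on `ℝ^d`. -/
noncomputable def WassersteinP {d : ℕ} (p : ℝ)
    (μ ν : Measure (EuclideanSpace ℝ (Fin d))) : ℝ≥0∞ :=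
  ⨅ (π : Measure (EuclideanSpace ℝ (Fin d) × EuclideanSpace ℝ (Fin d)))
    (_ : π.map Prod.fst = μ ∧ π.map Prod.snd = ν),
      ∫⁻ z, ENNReal.ofReal (‖z.1 - z.2‖ ^ p) ∂π

/-- If `X_n → X_∞` in `L²`, then `E[W₂²(L(X_n|G), L(X_∞|G))] → 0`. -/
theorem tendsto_wasserstein_condLaw_of_L2_tendsto
    {Ω : Type*} [mΩ : MeasurableSpace Ω] [StandardBorelSpace Ω] [Nonempty Ω]
    (μ : Measure Ω) [IsProbabilityMeasure μ]
    {d : ℕ} (X : ℕ → Ω → EuclideanSpace ℝ (Fin d)) (Xinf : Ω → EuclideanSpace ℝ (Fin d))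
    (hX : ∀ n, Measurable (X n)) (hXinf : Measurable Xinf)
    (hL2 : Tendsto (fun n => ∫⁻ ω, ENNReal.ofReal (‖X n ω - Xinf ω‖ ^ 2) ∂μ)
      atTop (nhds 0))
    (G : MeasurableSpace Ω) (hG : G ≤ mΩ) :
    Tendsto (fun n =>
        ∫⁻ ω, WassersteinP 2
          (@Measure.map Ω _ mΩ _ (X n) (condExpKernel (mΩ := mΩ) μ G ω))
          (@Measure.map Ω _ mΩ _ Xinf (condExpKernel (mΩ := mΩ) μ G ω)) ∂μ)
      atTop (nhds 0) := by
  letI : MeasurableSpace Ω := mΩ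
  have key : ∀ n,
      (∫⁻ ω, WassersteinP 2
          (@Measure.map Ω _ mΩ _ (X n) (condExpKernel (mΩ := mΩ) μ G ω))
          (@Measure.map Ω _ mΩ _ Xinf (condExpKernel (mΩ := mΩ) μ G ω)) ∂μ)
        ≤ ∫⁻ ω, ENNReal.ofReal (‖X n ω - Xinf ω‖ ^ 2) ∂μ := by
    intro n
    have hmeas : Measurable fun y : Ω => ENNReal.ofReal (‖X n y - Xinf y‖ ^ 2) :=
      (((hX n).sub hXinf).norm.pow_const 2).ennreal_ofReal
    calc (∫⁻ ω, WassersteinP 2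
          (@Measure.map Ω _ mΩ _ (X n) (condExpKernel (mΩ := mΩ) μ G ω))
          (@Measure.map Ω _ mΩ _ Xinf (condExpKernel (mΩ := mΩ) μ G ω)) ∂μ)
        ≤ ∫⁻ ω, ∫⁻ y, ENNReal.ofReal (‖X n y - Xinf y‖ ^ 2)
            ∂(condExpKernel (mΩ := mΩ) μ G ω) ∂μ := by
          refine lintegral_mono fun ω => ?_
          set κω := condExpKernel (mΩ := mΩ) μ G ω
          have h1 : (κω.map fun y => (X n y, Xinf y)).map Prod.fst = κω.map (X n) := by
            rw [Measure.map_map measurable_fst ((hX n).prodMk hXinf)]; rfl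
          have h2 : (κω.map fun y => (X n y, Xinf y)).map Prod.snd = κω.map Xinf := by
            rw [Measure.map_map measurable_snd ((hX n).prodMk hXinf)]; rfl
          refine le_trans (iInf₂_le (κω.map fun y => (X n y, Xinf y)) ⟨h1, h2⟩)
            (le_of_eq ?_)
          have hcast : ∀ x : ℝ, x ^ (2 : ℝ) = x ^ (2 : ℕ) := fun x => by
            rw [show (2 : ℝ) = ((2 : ℕ) : ℝ) by norm_num, Real.rpow_natCast]
          simp_rw [hcast]
          exact lintegral_map
            (((measurable_fst.sub measurable_snd).norm.pow_const 2).ennreal_ofReal)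
            ((hX n).prodMk hXinf)
      _ = ∫⁻ ω, ENNReal.ofReal (‖X n ω - Xinf ω‖ ^ 2) ∂μ :=
          lintegral_lintegral_condExpKernel μ hmeas G
  exact tendsto_of_tendsto_of_tendsto_of_le_of_le tendsto_const_nhds hL2
    (fun n => zero_le) key
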